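/- The space 𝒳 is a Fréchet (Fréchet–Urysohn) compact space that is not bisequential: for every subset 𝒜 ⊆ 𝒳 and every point x in the closure of 𝒜 there is a sequence of elements of 𝒜 converging to x, yet 𝒳 is not bisequential. -/

import Mathlib

open Cardinal Filter Topology Set

noncomputable section
open Classical

/-- `ω₁`, the first uncountable ordinal, viewed as the linearly ordered type of
all countable ordinals. -/
abbrev Omega1 : Type 1 := ↥(Set.Iio (Cardinal.aleph 1).ord)

/-- The vertical section `A_α = {β : (α, β) ∈ A}`. -/
def vertSection (A : Set (Omega1 × Omega1)) (α : Omega1) : Set Omega1 :=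
  {β | (α, β) ∈ A}

/-- The horizontal section `A^α = {γ : (γ, α) ∈ A}`. -/
def horSection (A : Set (Omega1 × Omega1)) (α : Omega1) : Set Omega1 :=
  {γ | (γ, α) ∈ A}

/-- Membership in the σ-ideal `𝓘`: for all but countably many `α ∈ ω₁` both the
vertical and the horizontal section of `A` at `α` are countable. -/
def MemIdealI (A : Set (Omega1 × Omega1)) : Prop :=
  {α : Omega1 | ¬ ((vertSection A α).Countable ∧ (horSection A α).Countable)}.Countable

/-- `F` is a finite graph of a strictly decreasing partial function: `F` is finite,
contains no two pairs with the same first coordinate, and whenever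
`(α,β), (α',β') ∈ F` with `α < α'` then `β > β'`. -/
def IsDecGraph {T : Type*} [LinearOrder T] (F : Set (T × T)) : Prop :=
  F.Finite ∧ (∀ p ∈ F, ∀ q ∈ F, p.1 = q.1 → p = q) ∧
    (∀ p ∈ F, ∀ q ∈ F, p.1 < q.1 → q.2 < p.2)

/-- The characteristic function of a set, with values in `{0,1} = Bool`. -/
def chi {T : Type*} (A : Set T) : T → Bool := fun x => if x ∈ A then true else false

/-- The space `𝒳` (over a linear order `T`) of characteristic functions of finite
graphs of strictly decreasing partial functions on `T`, viewed as a subset of the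
product space `{0,1}^(T × T)`; it carries the subspace topology. -/
def XSpace (T : Type*) [LinearOrder T] : Set ((T × T) → Bool) :=
  {f | ∃ F : Set (T × T), IsDecGraph F ∧ f = chi F}

/-- The space `𝒳_B = {A ∈ 𝒳 : A ⊆ B}`, as a subset of `{0,1}^(ω₁ × ω₁)`. -/
def XSpaceIn (B : Set (Omega1 × Omega1)) : Set ((Omega1 × Omega1) → Bool) :=
  {f | ∃ F : Set (Omega1 × Omega1), IsDecGraph F ∧ F ⊆ B ∧ f = chi F}

/-- The support of a point of `{0,1}^T`: the set of which it is the
characteristic function. -/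
def supp {T : Type*} (f : T → Bool) : Set T := {x | f x = true}

/-- A topological space `X` is bisequential if for every ultrafilter `𝒰` on `X`
converging to a point `x` (every neighbourhood of `x` belongs to `𝒰`) there is a
decreasing sequence `U₀ ⊇ U₁ ⊇ ⋯` of members of `𝒰` converging to `x` (every
neighbourhood of `x` contains `Uₙ` for all sufficiently large `n`). -/
def Bisequential (X : Type*) [TopologicalSpace X] : Prop :=
  ∀ (𝒰 : Ultrafilter X) (x : X), (𝒰 : Filter X) ≤ 𝓝 x →
    ∃ U : ℕ → Set X, (∀ n, U n ∈ 𝒰) ∧ (∀ n, U (n + 1) ⊆ U n) ∧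
      ∀ V ∈ 𝓝 x, ∀ᶠ n in atTop, U n ⊆ V

/-!
`𝒳` is closed in the compact space `{0,1}^(ω₁ × ω₁)`: a set of pairs that is pairwise a
decreasing graph is an antichain for the product order of `ω₁ × ω₁`, a well-quasi-order, so it is
automatically finite.

Fréchet: given `x` in the closure of `𝒜`, choose successively points of `𝒜` agreeing with `x` on
the supports of `x` and of all earlier points; then every coordinate is eventually that of `x`.

Not bisequential: call `B ⊆ ω₁ × ω₁` large if for cocountably many `α`, for cocountably many `β`,
`(α, β) ∈ B`. Large sets form a countably complete filter, and finitely many non-large sets can be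
escaped simultaneously by one decreasing graph avoiding any given finite set. Hence some ultrafilter
converging to `∅` contains `{A : A ⊄ B}` for every non-large `B`. If `U₀ ⊇ U₁ ⊇ ⋯` are members of
it, the union of the supports of the members of `Uₙ` is large for each `n`, so all of these unions
share a point `(α, β)`, and no `Uₙ` lies in the neighbourhood `{A : (α, β) ∉ A}` of `∅`.
-/

instance {α : Type*} : CountableInterFilter (cocountable : Filter α) :=
  cardinalInterFilter_aleph_one_iff.mp inferInstance

instance {α : Type*} [Uncountable α] : (cocountable : Filter α).NeBot :=
  forall_mem_nonempty_iff_neBot.1 fun S hS => by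
    by_contra h
    rw [not_nonempty_iff_eq_empty] at h
    rw [mem_cocountable, h, compl_empty, countable_univ_iff] at hS
    exact not_countable hS

instance {α β : Type*} {l : Filter α} {m : Filter β} [l.NeBot] [m.NeBot] : (l.curry m).NeBot :=
  forall_mem_nonempty_iff_neBot.1 fun _ hS =>
    let ⟨x, hx⟩ := (mem_curry_iff.1 hS).exists
    let ⟨y, hy⟩ := hx.exists
    ⟨(x, y), hy⟩

theorem Set.Countable.eventually_notMem_cocountable {α : Type*} {C : Set α} (hC : C.Countable) :
    ∀ᶠ x in cocountable, x ∉ C :=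
  show Cᶜ ∈ cocountable from mem_cocountable.2 (by rwa [compl_compl])

theorem tendsto_pi_nhds_discrete {ι T Y : Type*} [TopologicalSpace Y] [DiscreteTopology Y]
    {l : Filter ι} {u : ι → T → Y} {x : T → Y} :
    Tendsto u l (𝓝 x) ↔ ∀ t, ∀ᶠ i in l, u i t = x t := by
  simp only [tendsto_pi_nhds, nhds_discrete, tendsto_pure]

theorem frechetUrysohnSpace_of_finite_supp {T : Type*} {X : Set (T → Bool)}
    (hX : ∀ f ∈ X, (supp f).Finite) : FrechetUrysohnSpace X := by
  refine ⟨fun 𝒜 x hx => ?_⟩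
  have hval_tendsto := tendsto_pi_nhds_discrete.1 (continuous_subtype_val.tendsto x)
  have hpick (D : Finset T) : ∃ g ∈ 𝒜, ∀ t ∈ D, (g : T → Bool) t = (x : T → Bool) t := by
    obtain ⟨g, hgD, hg𝒜⟩ := mem_closure_iff_nhds.mp hx _
      ((D.eventually_all).2 fun t _ => hval_tendsto t)
    exact ⟨g, hg𝒜, hgD⟩
  choose pick hpick𝒜 hpickD using hpick
  let suppFin (g : X) : Finset T := (hX g g.2).toFinset
  let D : ℕ → Finset T := fun n => Nat.rec (suppFin x) (fun _ D => D ∪ suppFin (pick D)) n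
  have hD_mono : Monotone D := monotone_nat_of_le_succ fun n => Finset.subset_union_left
  refine ⟨fun n => pick (D n), fun n => hpick𝒜 _, ?_⟩
  rw [tendsto_subtype_rng, tendsto_pi_nhds_discrete]
  intro t
  rcases Classical.em (∃ n, t ∈ D n) with ⟨n, hn⟩ | ht
  · filter_upwards [eventually_ge_atTop n] with m hm using hpickD _ t (hD_mono hm hn)
  · push Not at ht
    have hxt : (x : T → Bool) t = false := by simpa [D, suppFin, supp] using ht 0
    refine Eventually.of_forall fun n => ?_
    have hn : t ∉ suppFin (pick (D n)) := fun h => ht (n + 1) (Finset.mem_union_right _ h)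
    simpa [hxt, suppFin, supp] using hn

theorem not_bisequential_of_countableInterFilter {X T : Type*} [TopologicalSpace X]
    (s : X → Set T) (x₀ : X) (hs : ∀ t, ∀ᶠ g in 𝓝 x₀, t ∉ s g)
    (L : Filter T) [CountableInterFilter L] [L.NeBot]
    (hL : ∀ 𝔅 : Set (Set T), 𝔅.Finite → (∀ B ∈ 𝔅, B ∉ L) →
      x₀ ∈ closure {g | ∀ B ∈ 𝔅, ¬ s g ⊆ B}) :
    ¬ Bisequential X := by
  intro hbiseq
  set escape : Set T → Set X := fun B => {g | ¬ s g ⊆ B}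
  have hne : (𝓝 x₀ ⊓ generate (escape '' {B | B ∉ L})).NeBot := by
    refine Filter.inf_neBot_iff.2 fun U hU V hV => ?_
    obtain ⟨𝔅, h𝔅L, h𝔅, h𝔅V⟩ :=
      Set.exists_subset_image_finite_and.1 (Filter.mem_generate_iff.1 hV)
    obtain ⟨g, hgU, hg⟩ := mem_closure_iff_nhds.1 (hL 𝔅 h𝔅 h𝔅L) U hU
    exact ⟨g, hgU, h𝔅V (by simpa [escape] using hg)⟩
  set 𝒰 := Ultrafilter.of (𝓝 x₀ ⊓ generate (escape '' {B | B ∉ L}))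
  have h𝒰 : (𝒰 : Filter X) ≤ _ := Ultrafilter.of_le _
  have h𝒰_escape : ∀ B ∉ L, escape B ∈ 𝒰 := fun B hB =>
    Filter.le_generate_iff.1 (h𝒰.trans inf_le_right) ⟨B, hB, rfl⟩
  obtain ⟨U, hU𝒰, -, hUx₀⟩ := hbiseq 𝒰 x₀ (h𝒰.trans inf_le_left)
  have hUL (n : ℕ) : (⋃ g ∈ U n, s g) ∈ L := by
    by_contra hn
    obtain ⟨g, hgU, hg⟩ := Ultrafilter.nonempty_of_mem (inter_mem (hU𝒰 n) (h𝒰_escape _ hn))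
    exact hg (subset_biUnion_of_mem hgU)
  obtain ⟨t, ht⟩ := Filter.nonempty_of_mem ((countable_iInter_mem (l := L)).2 hUL)
  obtain ⟨n, hn⟩ := (hUx₀ _ (hs t)).exists
  obtain ⟨g, hgU, htg⟩ := mem_iUnion₂.1 (mem_iInter.1 ht n)
  exact hn hgU htg

theorem supp_chi {T : Type*} (A : Set T) : supp (chi A) = A := by
  ext x; by_cases h : x ∈ A <;> simp [supp, chi, h]

theorem chi_supp {T : Type*} (f : T → Bool) : chi (supp f) = f := by
  funext x; cases h : f x <;> simp [chi, supp, h]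

section DecGraph

variable {T : Type*} [LinearOrder T]

theorem isDecGraph_iff_of_wellFoundedLT [WellFoundedLT T] {F : Set (T × T)} :
    IsDecGraph F ↔ (∀ p ∈ F, ∀ q ∈ F, p.1 = q.1 → p = q) ∧
      (∀ p ∈ F, ∀ q ∈ F, p.1 < q.1 → q.2 < p.2) := by
  refine ⟨fun h => h.2, fun ⟨hfun, hdec⟩ => ⟨?_, hfun, hdec⟩⟩
  -- a decreasing graph is an antichain for the product order, and `T × T` is a wqo (Dickson)
  refine WellQuasiOrderedLE.finite_of_isAntichain fun p hp q hq hne hle => hne ?_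
  rcases (Prod.le_def.mp hle).1.lt_or_eq with hlt | heq
  · exact absurd (Prod.le_def.mp hle).2 (hdec p hp q hq hlt).not_ge
  · exact hfun p hp q hq heq

theorem IsDecGraph.insert_of_forall_lt {F : Set (T × T)} (hF : IsDecGraph F) {q : T × T}
    (hq : ∀ p ∈ F, q.1 < p.1 ∧ p.2 < q.2) : IsDecGraph (insert q F) := by
  obtain ⟨hfin, hfun, hdec⟩ := hF
  refine ⟨hfin.insert q, ?_, ?_⟩
  · rintro p (rfl | hp) p' (rfl | hp') h
    · rfl
    · exact absurd h (hq p' hp').1.ne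
    · exact absurd h.symm (hq p hp).1.ne
    · exact hfun p hp p' hp' h
  · rintro p (rfl | hp) p' (rfl | hp') h
    · exact absurd h (lt_irrefl _)
    · exact (hq p' hp').2
    · exact absurd h (hq p hp).1.asymm
    · exact hdec p hp p' hp' h

theorem mem_XSpace_iff {f : T × T → Bool} : f ∈ XSpace T ↔ IsDecGraph (supp f) := by
  refine ⟨?_, fun h => ⟨supp f, h, (chi_supp f).symm⟩⟩
  rintro ⟨F, hF, rfl⟩
  rwa [supp_chi]

theorem isClosed_XSpace [WellFoundedLT T] : IsClosed (XSpace T) := by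
  have hX : XSpace T = ⋂ (p) (q), {f : T × T → Bool | f p = true → f q = true →
      (p.1 = q.1 → p = q) ∧ (p.1 < q.1 → q.2 < p.2)} := by
    ext f
    simp only [mem_XSpace_iff, isDecGraph_iff_of_wellFoundedLT, supp, mem_iInter, mem_ofPred_eq]
    grind
  have hopen (p : T × T) : IsOpen {f : T × T → Bool | f p = true} :=
    (isOpen_discrete ({true} : Set Bool)).preimage (continuous_apply (A := fun _ => Bool) p)
  rw [hX]
  exact isClosed_iInter fun p => isClosed_iInter fun q =>
    isClosed_imp (hopen p) (isClosed_imp (hopen q) isClosed_const)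

end DecGraph

theorem Omega1.mk_eq_aleph_one : #Omega1 = ℵ₁ := by
  rw [Cardinal.mk_Iio_ordinal, Cardinal.card_ord, Cardinal.lift_aleph]; simp

instance : Uncountable Omega1 :=
  Cardinal.aleph0_lt_mk_iff.mp (Omega1.mk_eq_aleph_one ▸ Cardinal.aleph0_lt_aleph_one)

theorem Omega1.countable_Iic (a : Omega1) : (Iic a).Countable := by
  have h := Cardinal.mk_Iic_lt a (by simp) (Omega1.mk_eq_aleph_one ▸ Cardinal.aleph0_le_aleph 1)
  rwa [Omega1.mk_eq_aleph_one, Cardinal.lt_aleph_one_iff,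
    Cardinal.le_aleph0_iff_set_countable] at h

theorem exists_isDecGraph_forall_not_subset {𝔅 : Set (Set (Omega1 × Omega1))} (h𝔅 : 𝔅.Finite)
    (h𝔅L : ∀ B ∈ 𝔅, B ∉ cocountable.curry cocountable) {C : Set Omega1} (hC : C.Countable) :
    ∃ F, IsDecGraph F ∧ (∀ p ∈ F, p.1 ∉ C) ∧ ∀ B ∈ 𝔅, ¬ F ⊆ B := by
  induction 𝔅, h𝔅 using Set.Finite.induction_on generalizing C with
  | empty => exact ⟨∅, ⟨finite_empty, by simp, by simp⟩, by simp, by simp⟩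
  | @insert B 𝔅 _ _ ih =>
    have hB : ∃ᶠ α in cocountable, ∃ᶠ β in cocountable, (α, β) ∉ B :=
      (frequently_curry_iff _).1 (Filter.not_eventually.1 (h𝔅L B (mem_insert _ _)))
    -- the new point gets the smallest first and the largest second coordinate
    obtain ⟨δ, hδB, hδC⟩ := (hB.and_eventually hC.eventually_notMem_cocountable).exists
    obtain ⟨F, hF, hFC, hF𝔅⟩ := ih (fun B' hB' => h𝔅L B' (mem_insert_of_mem _ hB'))
      (hC.union (Omega1.countable_Iic δ))
    have hFbound : ∀ᶠ γ in cocountable, ∀ p ∈ F, p.2 < γ :=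
      (eventually_all_finite hF.1).2 fun p _ =>
        (Omega1.countable_Iic p.2).eventually_notMem_cocountable.mono fun _ h => not_le.1 h
    obtain ⟨γ, hγB, hγF⟩ := (hδB.and_eventually hFbound).exists
    refine ⟨insert (δ, γ) F, hF.insert_of_forall_lt fun p hp => ⟨?_, hγF p hp⟩, ?_, ?_⟩
    · exact not_le.1 fun h => hFC p hp (Or.inr h)
    · rintro p (rfl | hp)
      exacts [hδC, fun h => hFC p hp (Or.inl h)]
    · rintro B' (rfl | hB') hsub
      exacts [hγB (hsub (mem_insert _ _)), hF𝔅 B' hB' (subset_insert _ _ |>.trans hsub)]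

def XSpace.emptyGraph (T : Type*) [LinearOrder T] : XSpace T :=
  ⟨chi ∅, ∅, ⟨finite_empty, by simp, by simp⟩, rfl⟩

theorem XSpace.eventually_notMem_supp_nhds_emptyGraph {T : Type*} [LinearOrder T] (t : T × T) :
    ∀ᶠ g : XSpace T in 𝓝 (XSpace.emptyGraph T), t ∉ supp (g : T × T → Bool) :=
  (tendsto_pi_nhds_discrete.1 (continuous_subtype_val.tendsto _) t).mono fun g hg => by
    simp [supp, hg, XSpace.emptyGraph, chi]

theorem XSpace.emptyGraph_mem_closure {𝔅 : Set (Set (Omega1 × Omega1))} (h𝔅 : 𝔅.Finite)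
    (h𝔅L : ∀ B ∈ 𝔅, B ∉ cocountable.curry cocountable) :
    XSpace.emptyGraph Omega1 ∈
      closure {g : XSpace Omega1 | ∀ B ∈ 𝔅, ¬ supp (g : Omega1 × Omega1 → Bool) ⊆ B} := by
  choose F hF hFI hF𝔅 using fun I : Finset (Omega1 × Omega1) =>
    exists_isDecGraph_forall_not_subset h𝔅 h𝔅L (I.finite_toSet.image Prod.fst).countable
  refine mem_closure_of_tendsto (b := atTop) (f := fun I => ⟨chi (F I), F I, hF I, rfl⟩) ?_
    (Eventually.of_forall fun I => by simpa [supp_chi] using hF𝔅 I)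
  rw [tendsto_subtype_rng, tendsto_pi_nhds_discrete]
  intro c
  filter_upwards [eventually_ge_atTop {c}] with I hI
  have hc : c ∉ F I := fun hc => hFI I c hc ⟨c, hI (Finset.mem_singleton_self c), rfl⟩
  simp [XSpace.emptyGraph, chi, hc]

/-- The space `𝒳` is a Fréchet compact space that is not bisequential: every point of
the closure of a subset `𝒜 ⊆ 𝒳` is a limit of a sequence of elements of `𝒜`, `𝒳` is
compact, and yet `𝒳` is not bisequential. -/
theorem XSpace_frechet_compact_not_bisequential :
    (∀ (𝒜 : Set ↥(XSpace Omega1)) (x : ↥(XSpace Omega1)), x ∈ closure 𝒜 →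
      ∃ u : ℕ → ↥(XSpace Omega1), (∀ n, u n ∈ 𝒜) ∧ Tendsto u atTop (𝓝 x)) ∧
    CompactSpace ↥(XSpace Omega1) ∧
    ¬ Bisequential ↥(XSpace Omega1) := by
  have : FrechetUrysohnSpace (XSpace Omega1) :=
    frechetUrysohnSpace_of_finite_supp fun _ hf => (mem_XSpace_iff.1 hf).1
  refine ⟨fun _ _ hx => mem_closure_iff_seq_limit.1 hx,
    isCompact_iff_compactSpace.1 isClosed_XSpace.isCompact, ?_⟩
  exact not_bisequential_of_countableInterFilter (fun g => supp (g : Omega1 × Omega1 → Bool))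
    (XSpace.emptyGraph Omega1) XSpace.eventually_notMem_supp_nhds_emptyGraph
    (cocountable.curry cocountable) fun _ h𝔅 h𝔅L => XSpace.emptyGraph_mem_closure h𝔅 h𝔅L

end
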